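/- Let Q ∈ ℝ^{p×p} be symmetric positive definite, q ∈ ℝ^p, 𝐰 ∈ ℝ^p, μ ≥ 0, and let ŵ minimize J(w) = ½(w−𝐰)ᵀQ(w−𝐰) − qᵀ(w−𝐰) + μ‖w‖₁. Then ‖Q^{1/2}(ŵ − 𝐰)‖₂ ≤ (p^{1/2}·μ + ‖q‖₂)/λ_min(Q)^{1/2}. -/

import Mathlib

open Matrix

/-- Smallest eigenvalue of a symmetric matrix, as the infimum of the Rayleigh quotient
over the unit sphere. -/
noncomputable def lambdaMin {ι : Type*} [Fintype ι] (A : Matrix ι ι ℝ) : ℝ :=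
  sInf {r | ∃ v : ι → ℝ, (∑ i, v i ^ 2) = 1 ∧ r = v ⬝ᵥ A.mulVec v}

/-- Largest eigenvalue of a symmetric matrix, as the supremum of the Rayleigh quotient
over the unit sphere. -/
noncomputable def lambdaMax {ι : Type*} [Fintype ι] (A : Matrix ι ι ℝ) : ℝ :=
  sSup {r | ∃ v : ι → ℝ, (∑ i, v i ^ 2) = 1 ∧ r = v ⬝ᵥ A.mulVec v}

/-- The `ℓ²` operator norm (largest singular value) of a matrix. -/
noncomputable def opNorm {ι : Type*} [Fintype ι] (A : Matrix ι ι ℝ) : ℝ :=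
  sSup {r | ∃ v : ι → ℝ, (∑ i, v i ^ 2) = 1 ∧ r = Real.sqrt (∑ i, (A.mulVec v i) ^ 2)}

/-- The euclidean (`ℓ²`) norm of a vector. -/
noncomputable def norm2 {ι : Type*} [Fintype ι] (v : ι → ℝ) : ℝ :=
  Real.sqrt (∑ i, v i ^ 2)

/-- The `ℓ¹` norm of a vector. -/
noncomputable def norm1 {ι : Type*} [Fintype ι] (v : ι → ℝ) : ℝ :=
  ∑ i, |v i|

/-! Put `u = ŵ - 𝐰`. Comparing `J ŵ` with `J` at the points `s • 𝐰 + (1 - s) • ŵ` and letting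
`s → 0` (comparing with `J 𝐰` alone would lose a factor 2) gives, by convexity of `‖·‖₁`,
the variational inequality `uᵀQu ≤ qᵀu + μ (‖𝐰‖₁ - ‖ŵ‖₁) ≤ (√p μ + ‖q‖₂) ‖u‖₂`
(Cauchy–Schwarz and `‖·‖₁ ≤ √p ‖·‖₂`). Since `‖Q^{1/2} u‖₂² = uᵀQu ≥ λ_min(Q) ‖u‖₂²`, this
bounds `‖u‖₂` by `(√p μ + ‖q‖₂)/λ_min(Q)` and hence `uᵀQu` by `(√p μ + ‖q‖₂)² / λ_min(Q)`. -/

open Filter Topology Set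

lemma le_of_forall_le_add_mul {a b c : ℝ} (h : ∀ s ∈ Ioc (0 : ℝ) 1, a ≤ b + s * c) : a ≤ b := by
  have hlim : Tendsto (fun s => b + s * c) (𝓝[>] 0) (𝓝 b) := by
    have : Tendsto (fun s => b + s * c) (𝓝 0) (𝓝 (b + 0 * c)) :=
      ((continuous_id.mul continuous_const).const_add b).tendsto 0
    simpa using this.mono_left nhdsWithin_le_nhds
  exact ge_of_tendsto hlim (eventually_of_mem (Ioc_mem_nhdsGT zero_lt_one) h)

lemma sqrt_le_div_sqrt_of_le_mul {a c C L : ℝ} (hL : 0 < L) (hC : 0 ≤ C) (haC : a ≤ C * c)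
    (hLa : L * c ^ 2 ≤ a) : √a ≤ C / √L := by
  have hLaC : L * a ≤ C ^ 2 := by nlinarith [sq_nonneg (C - L * c)]
  rw [le_div_iff₀ (Real.sqrt_pos.2 hL), ← Real.sqrt_mul' a hL.le, Real.sqrt_le_left hC]
  linarith

section

variable {ι : Type*} [Fintype ι]

lemma norm2_nonneg (v : ι → ℝ) : 0 ≤ norm2 v := Real.sqrt_nonneg _

lemma norm2_sq (v : ι → ℝ) : norm2 v ^ 2 = ∑ i, v i ^ 2 :=
  Real.sq_sqrt (Finset.sum_nonneg fun _ _ => sq_nonneg _)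

lemma dotProduct_le_norm2_mul_norm2 (v w : ι → ℝ) : v ⬝ᵥ w ≤ norm2 v * norm2 w :=
  Real.sum_mul_le_sqrt_mul_sqrt _ v w

lemma norm1_le_sqrt_card_mul_norm2 (v : ι → ℝ) :
    norm1 v ≤ Real.sqrt (Fintype.card ι) * norm2 v := by
  simpa [norm1, norm2] using Real.sum_mul_le_sqrt_mul_sqrt Finset.univ (fun _ => (1 : ℝ)) (|v ·|)

lemma norm1_sub_norm1_le (v w : ι → ℝ) : norm1 v - norm1 w ≤ norm1 (w - v) := by
  rw [norm1, norm1, norm1, ← Finset.sum_sub_distrib]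
  refine Finset.sum_le_sum fun i _ => ?_
  rw [Pi.sub_apply, abs_sub_comm]
  exact abs_sub_abs_le_abs_sub _ _

lemma convexOn_norm1 : ConvexOn ℝ univ (norm1 : (ι → ℝ) → ℝ) := by
  refine ⟨convex_univ, fun x _ y _ a b ha hb _ => ?_⟩
  simp only [norm1, smul_eq_mul, Finset.mul_sum, ← Finset.sum_add_distrib]
  refine Finset.sum_le_sum fun i _ => ?_
  simpa [abs_mul, abs_of_nonneg ha, abs_of_nonneg hb] using abs_add_le (a * x i) (b * y i)

lemma isCompact_setOf_sum_sq_eq_one : IsCompact {v : ι → ℝ | ∑ i, v i ^ 2 = 1} := by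
  refine Metric.isCompact_of_isClosed_isBounded ?_
    ((Metric.isBounded_closedBall (x := 0) (r := 1)).subset ?_)
  · exact isClosed_singleton.preimage (by fun_prop)
  · intro v hv
    rw [Metric.mem_closedBall, dist_zero_right, pi_norm_le_iff_of_nonneg zero_le_one]
    intro i
    rw [Real.norm_eq_abs, ← sq_le_one_iff_abs_le_one, ← hv]
    exact Finset.single_le_sum (fun j _ => sq_nonneg (v j)) (Finset.mem_univ i)

lemma lambdaMin_mul_norm2_sq_le {A : Matrix ι ι ℝ} (hA : A.PosSemidef) (v : ι → ℝ) :
    lambdaMin A * norm2 v ^ 2 ≤ v ⬝ᵥ A *ᵥ v := by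
  rcases eq_or_ne (norm2 v) 0 with hv | hv
  · simpa [hv] using hA.dotProduct_mulVec_nonneg v
  have hbdd : BddBelow {r | ∃ u : ι → ℝ, (∑ i, u i ^ 2) = 1 ∧ r = u ⬝ᵥ A *ᵥ u} := by
    refine ⟨0, ?_⟩
    rintro r ⟨u, -, rfl⟩
    exact hA.dotProduct_mulVec_nonneg u
  have hunit : ∑ i, ((norm2 v)⁻¹ • v) i ^ 2 = 1 := by
    simp only [Pi.smul_apply, smul_eq_mul, mul_pow, ← Finset.mul_sum, ← norm2_sq, inv_pow]
    exact inv_mul_cancel₀ (pow_ne_zero 2 hv)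
  have hle := csInf_le hbdd ⟨_, hunit, rfl⟩
  rw [← lambdaMin, mulVec_smul, dotProduct_smul, smul_dotProduct, smul_eq_mul, smul_eq_mul,
    ← mul_assoc, ← sq, inv_pow] at hle
  rwa [← le_div_iff₀ (by positivity), div_eq_inv_mul]

lemma lambdaMin_pos [Nonempty ι] {A : Matrix ι ι ℝ} (hA : A.PosDef) : 0 < lambdaMin A := by
  have hne : {v : ι → ℝ | ∑ i, v i ^ 2 = 1}.Nonempty := by
    classical
    obtain ⟨i⟩ := ‹Nonempty ι›
    exact ⟨Pi.single i 1, by simp [sq, Pi.single_apply]⟩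
  obtain ⟨v, hv, hmin⟩ := isCompact_setOf_sum_sq_eq_one.exists_isMinOn hne
    (f := fun v => v ⬝ᵥ A *ᵥ v) (by fun_prop)
  have hv0 : v ≠ 0 := by rintro rfl; simp at hv
  refine (hA.dotProduct_mulVec_pos hv0).trans_le (le_csInf ⟨_, v, hv, rfl⟩ ?_)
  rintro r ⟨u, hu, rfl⟩
  exact hmin hu

lemma Matrix.PosSemidef.cfc_sqrt_mul_self [DecidableEq ι] {A : Matrix ι ι ℝ}
    (hA : A.PosSemidef) :
    hA.isHermitian.cfc Real.sqrt * hA.isHermitian.cfc Real.sqrt = A := by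
  rw [← hA.isHermitian.cfc_eq, ← cfc_mul Real.sqrt Real.sqrt A]
  conv_rhs => rw [← cfc_id' ℝ A (ha := hA.isHermitian)]
  refine cfc_congr fun x hx => ?_
  rw [hA.isHermitian.spectrum_real_eq_range_eigenvalues] at hx
  obtain ⟨i, rfl⟩ := hx
  exact Real.mul_self_sqrt (hA.eigenvalues_nonneg i)

lemma Matrix.PosSemidef.transpose_cfc_sqrt [DecidableEq ι] {A : Matrix ι ι ℝ}
    (hA : A.PosSemidef) :
    (hA.isHermitian.cfc Real.sqrt)ᵀ = hA.isHermitian.cfc Real.sqrt := by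
  have h : IsSelfAdjoint (cfc Real.sqrt A) := cfc_predicate _ _
  rwa [hA.isHermitian.cfc_eq, IsSelfAdjoint, star_eq_conjTranspose,
    conjTranspose_eq_transpose_of_trivial] at h

lemma Matrix.PosSemidef.norm2_cfc_sqrt_mulVec_sq [DecidableEq ι] {A : Matrix ι ι ℝ}
    (hA : A.PosSemidef) (v : ι → ℝ) :
    norm2 (hA.isHermitian.cfc Real.sqrt *ᵥ v) ^ 2 = v ⬝ᵥ A *ᵥ v := by
  set R := hA.isHermitian.cfc Real.sqrt
  calc norm2 (R *ᵥ v) ^ 2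
      = R *ᵥ v ⬝ᵥ R *ᵥ v := by rw [norm2_sq]; simp only [dotProduct, sq]
    _ = v ⬝ᵥ (Rᵀ * R) *ᵥ v := by
      rw [← mulVec_mulVec, mulVec_transpose, dotProduct_comm v, dotProduct_mulVec]
    _ = v ⬝ᵥ A *ᵥ v := by rw [hA.transpose_cfc_sqrt, hA.cfc_sqrt_mul_self]

lemma dotProduct_mulVec_le_of_isMinimizer {Q : Matrix ι ι ℝ} {g : (ι → ℝ) → ℝ} (hg : ConvexOn ℝ univ g) {q w wh : ι → ℝ}
    (hmin : ∀ v : ι → ℝ,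
      (1 / 2) * ((wh - w) ⬝ᵥ Q *ᵥ (wh - w)) - q ⬝ᵥ (wh - w) + g wh ≤
      (1 / 2) * ((v - w) ⬝ᵥ Q *ᵥ (v - w)) - q ⬝ᵥ (v - w) + g v) :
    (wh - w) ⬝ᵥ Q *ᵥ (wh - w) ≤ q ⬝ᵥ (wh - w) + (g w - g wh) := by
  set u := wh - w
  refine le_of_forall_le_add_mul (c := (u ⬝ᵥ Q *ᵥ u) / 2) fun s ⟨hs0, hs1⟩ => ?_
  have hJ := hmin (s • w + (1 - s) • wh)
  have hsub : s • w + (1 - s) • wh - w = (1 - s) • u := by simp only [u]; module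
  have hconv := hg.2 (mem_univ w) (mem_univ wh) hs0.le (sub_nonneg.2 hs1) (add_sub_cancel s 1)
  rw [hsub, mulVec_smul, dotProduct_smul, smul_dotProduct, dotProduct_smul] at hJ
  simp only [smul_eq_mul] at hJ hconv
  refine le_of_mul_le_mul_left ?_ hs0
  linarith

end

/-- Error bound for the Lasso-type minimizer in the `Q`-metric:
`‖Q^{1/2}(ŵ − 𝐰)‖₂ ≤ (√p·μ + ‖q‖₂)/λ_min(Q)^{1/2}`. -/
theorem stmt_7 {p : ℕ} (Q : Matrix (Fin p) (Fin p) ℝ) (hQ : Q.PosDef)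
    (q w wh : Fin p → ℝ) (μ : ℝ) (hμ : 0 ≤ μ)
    (hmin : ∀ v : Fin p → ℝ,
      (1 / 2) * ((wh - w) ⬝ᵥ Q.mulVec (wh - w)) - q ⬝ᵥ (wh - w) + μ * norm1 wh ≤
      (1 / 2) * ((v - w) ⬝ᵥ Q.mulVec (v - w)) - q ⬝ᵥ (v - w) + μ * norm1 v) :
    norm2 ((hQ.posSemidef.isHermitian.cfc Real.sqrt).mulVec (wh - w)) ≤
      (Real.sqrt p * μ + norm2 q) / Real.sqrt (lambdaMin Q) := by
  set u := wh - w
  have hvar : u ⬝ᵥ Q *ᵥ u ≤ q ⬝ᵥ u + (μ * norm1 w - μ * norm1 wh) :=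
    dotProduct_mulVec_le_of_isMinimizer (convexOn_norm1.smul hμ) hmin
  have hpen :
      q ⬝ᵥ u + (μ * norm1 w - μ * norm1 wh) ≤ (Real.sqrt p * μ + norm2 q) * norm2 u := by
    have hq := dotProduct_le_norm2_mul_norm2 q u
    have hl1 := (norm1_sub_norm1_le w wh).trans (norm1_le_sqrt_card_mul_norm2 u)
    rw [Fintype.card_fin] at hl1
    linarith [mul_le_mul_of_nonneg_left hl1 hμ]
  obtain hp | hp := isEmpty_or_nonempty (Fin p)
  · simp [norm2]
    positivity
  rw [← Real.sqrt_sq (norm2_nonneg _), hQ.posSemidef.norm2_cfc_sqrt_mulVec_sq]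
  exact sqrt_le_div_sqrt_of_le_mul (lambdaMin_pos hQ)
    (add_nonneg (by positivity) (norm2_nonneg q)) (hvar.trans hpen) (lambdaMin_mul_norm2_sq_le hQ.posSemidef u)
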